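/- arXiv:math/0609285 — 3 statements merged into one kernel-verified Lean document; each statement's English description precedes it below -/
import Mathlib

section
/- Let T_o : {-1,1}^n → ℝ be monotone in the sense that T_o(σ) ≤ T_o(σ') whenever σ ≤ σ' component-wise, and define T(v) := max(T_o(sign(v)), T_o(sign(-v))) where sign(x) = 1 if x > 0 and -1 if x ≤ 0, applied component-wise. Suppose Y_1,…,Y_n are independent real random variables and m ∈ ℝ^n satisfies P(Y_i ≤ m_i) ≥ 1/2 and P(Y_i ≥ m_i) ≥ 1/2 for each i. If ξ is a vector of n independent Rademacher variables, then for every κ ∈ ℝ, P(T(Y - m) ≤ κ) ≥ P(T(ξ) ≤ κ). -/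
open MeasureTheory ProbabilityTheory Finset

lemma sign_test_aux (n : ℕ) (p q r : Fin n → ENNReal)
    (hp : ∀ i, p i ≤ 1/2) (hq : ∀ i, q i ≤ 1/2)
    (hr : ∀ i, (1/2 - p i) + (1/2 - q i) = r i)
    (GB : Finset (Fin n → Bool)) (GC : Finset (Fin n → Fin 3))
    (hcompat : ∀ b c, b ∈ GB → (∀ i, b i = true → c i ≠ 1) →
      (∀ i, b i = false → c i ≠ 0) → c ∈ GC) :
    ∑ _b ∈ GB, (1/2 : ENNReal)^n ≤ ∑ c ∈ GC, ∏ i, ![p i, q i, r i] (c i) := by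
  classical
  set wi : Fin n → Bool → Fin 3 → ENNReal :=
    fun i b => if b then ![p i, 0, 1/2 - p i] else ![0, q i, 1/2 - q i] with hwi
  set w : (Fin n → Bool) → (Fin n → Fin 3) → ENNReal :=
    fun b c => ∏ i, wi i (b i) (c i) with hw
  have hrow : ∀ b, ∑ c : Fin n → Fin 3, w b c = (1/2 : ENNReal)^n := by
    intro b
    simp only [hw]
    rw [← Fintype.prod_sum fun i (j : Fin 3) => wi i (b i) j]
    have : ∀ i, ∑ j : Fin 3, wi i (b i) j = 1/2 := by
      intro i
      rw [Fin.sum_univ_three]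
      have hp' : p i ≤ 2⁻¹ := by rw [← one_div]; exact hp i
      have hq' : q i ≤ 2⁻¹ := by rw [← one_div]; exact hq i
      cases hb : b i <;> simp [hwi]
      · exact add_tsub_cancel_of_le hq'
      · exact add_tsub_cancel_of_le hp'
    simp [this]
  have hcol : ∀ c, ∑ b : Fin n → Bool, w b c = ∏ i, ![p i, q i, r i] (c i) := by
    intro c
    simp only [hw]
    rw [← Fintype.prod_sum fun i (j : Bool) => wi i j (c i)]
    refine Finset.prod_congr rfl fun i _ => ?_
    rw [Fintype.sum_bool]
    have : ∀ j : Fin 3, wi i true j + wi i false j = ![p i, q i, r i] j := by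
      intro j
      fin_cases j <;> simp [hwi] <;> rw [← one_div, ← hr i]
    exact this (c i)
  have hzero : ∀ b c, b ∈ GB → c ∉ GC → w b c = 0 := by
    intro b c hb hc
    by_contra hne
    apply hc
    refine hcompat b c hb (fun i hbi hci => ?_) (fun i hbi hci => ?_) <;>
    · apply hne
      rw [hw]
      exact Finset.prod_eq_zero (Finset.mem_univ i) (by simp [hwi, hbi, hci])
  calc ∑ _b ∈ GB, (1/2 : ENNReal)^n
      = ∑ b ∈ GB, ∑ c : Fin n → Fin 3, w b c := by
        exact Finset.sum_congr rfl fun b _ => (hrow b).symm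
    _ = ∑ b ∈ GB, ∑ c ∈ GC, w b c := by
        refine Finset.sum_congr rfl fun b hb => ?_
        exact (Finset.sum_subset (Finset.subset_univ GC)
          (fun c _ hc => hzero b c hb hc)).symm
    _ ≤ ∑ b : Fin n → Bool, ∑ c ∈ GC, w b c :=
        Finset.sum_le_sum_of_subset (Finset.subset_univ GB)
    _ = ∑ c ∈ GC, ∑ b : Fin n → Bool, w b c := Finset.sum_comm
    _ = ∑ c ∈ GC, ∏ i, ![p i, q i, r i] (c i) :=
        Finset.sum_congr rfl fun c _ => hcol c

theorem sign_test_stochastic_domination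
    {Ω Ω' : Type*} [MeasurableSpace Ω] [MeasurableSpace Ω']
    (μ : Measure Ω) [IsProbabilityMeasure μ]
    (ν : Measure Ω') [IsProbabilityMeasure ν]
    (n : ℕ) (To : (Fin n → ℝ) → ℝ)
    (hmono : ∀ σ σ' : Fin n → ℝ, (∀ i, σ i = 1 ∨ σ i = -1) →
      (∀ i, σ' i = 1 ∨ σ' i = -1) → σ ≤ σ' → To σ ≤ To σ')
    (sign : ℝ → ℝ) (hsign : ∀ x, sign x = if 0 < x then 1 else -1)
    (T : (Fin n → ℝ) → ℝ)
    (hT : ∀ v, T v = max (To (fun i => sign (v i))) (To (fun i => sign (-(v i)))))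
    (Y : Fin n → Ω → ℝ) (hYmeas : ∀ i, Measurable (Y i))
    (hYindep : iIndepFun Y μ)
    (m : Fin n → ℝ)
    (hmed₁ : ∀ i, μ {ω | Y i ω ≤ m i} ≥ 1/2)
    (hmed₂ : ∀ i, μ {ω | Y i ω ≥ m i} ≥ 1/2)
    (ξ : Fin n → Ω' → ℝ) (hξmeas : ∀ i, Measurable (ξ i))
    (hξindep : iIndepFun ξ ν)
    (hξval : ∀ i, ∀ ω, ξ i ω = 1 ∨ ξ i ω = -1)
    (hξdist : ∀ i, ν {ω | ξ i ω = 1} = 1/2)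
    (κ : ℝ) :
    μ {ω | T (fun i => Y i ω - m i) ≤ κ} ≥ ν {ω | T (fun i => ξ i ω) ≤ κ} := by
  classical
  -- basic quantities
  set p : Fin n → ENNReal := fun i => μ {ω | m i < Y i ω} with hp_def
  set q : Fin n → ENNReal := fun i => μ {ω | Y i ω < m i} with hq_def
  set r : Fin n → ENNReal := fun i => μ {ω | Y i ω = m i} with hr_def
  have h12 : (1 : ENNReal) - 1/2 = 1/2 :=
    ENNReal.sub_eq_of_eq_add (by norm_num) (ENNReal.add_halves 1).symm
  have mle : ∀ i, MeasurableSet {ω | Y i ω ≤ m i} :=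
    fun i => measurableSet_le (hYmeas i) measurable_const
  have mge : ∀ i, MeasurableSet {ω | m i ≤ Y i ω} :=
    fun i => measurableSet_le measurable_const (hYmeas i)
  have mlt : ∀ i, MeasurableSet {ω | Y i ω < m i} :=
    fun i => measurableSet_lt (hYmeas i) measurable_const
  have mgt : ∀ i, MeasurableSet {ω | m i < Y i ω} :=
    fun i => measurableSet_lt measurable_const (hYmeas i)
  have meq : ∀ i, MeasurableSet {ω | Y i ω = m i} :=
    fun i => (hYmeas i) (measurableSet_singleton (m i))
  have hp : ∀ i, p i ≤ 1/2 := by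
    intro i
    have hc : {ω | Y i ω ≤ m i}ᶜ = {ω | m i < Y i ω} := by
      ext ω; simp [not_le]
    have := prob_compl_eq_one_sub (μ := μ) (mle i)
    rw [hc] at this
    rw [hp_def]
    simp only []
    rw [this]
    calc 1 - μ {ω | Y i ω ≤ m i} ≤ 1 - 1/2 := tsub_le_tsub_left (hmed₁ i) 1
      _ = 1/2 := h12
  have hq : ∀ i, q i ≤ 1/2 := by
    intro i
    have hc : {ω | m i ≤ Y i ω}ᶜ = {ω | Y i ω < m i} := by
      ext ω; simp [not_le]
    have := prob_compl_eq_one_sub (μ := μ) (mge i)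
    rw [hc] at this
    rw [hq_def]
    simp only []
    rw [this]
    calc 1 - μ {ω | m i ≤ Y i ω} ≤ 1 - 1/2 := tsub_le_tsub_left (hmed₂ i) 1
      _ = 1/2 := h12
  have hsum3 : ∀ i, p i + q i + r i = 1 := by
    intro i
    have hd01 : Disjoint {ω | m i < Y i ω} {ω | Y i ω < m i} := by
      rw [Set.disjoint_left]
      intro ω h1 h2
      simp only [Set.mem_setOf_eq] at h1 h2
      exact lt_asymm h1 h2
    have hd2 : Disjoint ({ω | m i < Y i ω} ∪ {ω | Y i ω < m i}) {ω | Y i ω = m i} := by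
      rw [Set.disjoint_left]
      rintro ω (h1 | h1) h2 <;> simp only [Set.mem_setOf_eq] at h1 h2
      · rw [h2] at h1; exact lt_irrefl _ h1
      · rw [h2] at h1; exact lt_irrefl _ h1
    have hcover : ({ω | m i < Y i ω} ∪ {ω | Y i ω < m i}) ∪ {ω | Y i ω = m i} = Set.univ := by
      ext ω
      simp only [Set.mem_union, Set.mem_setOf_eq, Set.mem_univ, iff_true]
      rcases lt_trichotomy (Y i ω) (m i) with h | h | h
      · exact Or.inl (Or.inr h)
      · exact Or.inr h
      · exact Or.inl (Or.inl h)
    have h1 : μ ({ω | m i < Y i ω} ∪ {ω | Y i ω < m i}) = p i + q i :=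
      measure_union hd01 (mlt i)
    have h2 := measure_union (μ := μ) hd2 (meq i)
    rw [hcover, h1] at h2
    rw [← h2, measure_univ]
  have hfin : ∀ i, p i + q i ≠ ⊤ := by
    intro i
    exact ENNReal.add_ne_top.mpr ⟨((hp i).trans_lt (by norm_num)).ne,
      ((hq i).trans_lt (by norm_num)).ne⟩
  have hr : ∀ i, (1/2 - p i) + (1/2 - q i) = r i := by
    intro i
    have key : ((1/2 - p i) + (1/2 - q i)) + (p i + q i) = r i + (p i + q i) := by
      have l1 : (1/2 - p i) + p i = 1/2 := tsub_add_cancel_of_le (hp i)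
      have l2 : (1/2 - q i) + q i = 1/2 := tsub_add_cancel_of_le (hq i)
      calc ((1/2 - p i) + (1/2 - q i)) + (p i + q i)
          = ((1/2 - p i) + p i) + ((1/2 - q i) + q i) := by ring
        _ = 1/2 + 1/2 := by rw [l1, l2]
        _ = 1 := ENNReal.add_halves 1
        _ = p i + q i + r i := (hsum3 i).symm
        _ = r i + (p i + q i) := by ring
    exact (ENNReal.add_left_inj (hfin i)).mp key
  -- sign pattern vectors
  set εA : (Fin n → Fin 3) → (Fin n → ℝ) := fun c i => if c i = 0 then 1 else -1 with hεA
  set εB : (Fin n → Fin 3) → (Fin n → ℝ) := fun c i => if c i = 1 then 1 else -1 with hεB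
  set σA : (Fin n → Bool) → (Fin n → ℝ) := fun b i => if b i then 1 else -1 with hσA
  set σB : (Fin n → Bool) → (Fin n → ℝ) := fun b i => if b i then -1 else 1 with hσB
  set GC : Finset (Fin n → Fin 3) :=
    Finset.univ.filter (fun c => max (To (εA c)) (To (εB c)) ≤ κ) with hGC
  set GB : Finset (Fin n → Bool) :=
    Finset.univ.filter (fun b => max (To (σA b)) (To (σB b)) ≤ κ) with hGB
  -- the cells for Y
  set SS : Fin n → Fin 3 → Set ℝ := fun i => ![Set.Ioi (m i), Set.Iio (m i), {m i}] with hSS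
  have measSS : ∀ i j, MeasurableSet (SS i j) := by
    intro i j
    fin_cases j <;> simp [hSS]
  set CY : (Fin n → Fin 3) → Set Ω := fun c => ⋂ i, Y i ⁻¹' SS i (c i) with hCY
  have hCYmeas : ∀ c, MeasurableSet (CY c) :=
    fun c => MeasurableSet.iInter fun i => (hYmeas i) (measSS i (c i))
  have hCYval : ∀ c, μ (CY c) = ∏ i, ![p i, q i, r i] (c i) := by
    intro c
    rw [hCY]
    simp only []
    rw [hYindep.meas_iInter (fun i => ⟨SS i (c i), measSS i (c i), rfl⟩)]
    refine Finset.prod_congr rfl fun i _ => ?_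
    have : ∀ j : Fin 3, μ (Y i ⁻¹' SS i j) = ![p i, q i, r i] j := by
      intro j
      fin_cases j
      · show μ (Y i ⁻¹' Set.Ioi (m i)) = p i
        rfl
      · show μ (Y i ⁻¹' Set.Iio (m i)) = q i
        rfl
      · show μ (Y i ⁻¹' {m i}) = r i
        rfl
    exact this (c i)
  have SSdisj : ∀ i (j j' : Fin 3), j ≠ j' → ∀ x : ℝ, x ∈ SS i j → x ∈ SS i j' → False := by
    intro i j j' hne x
    fin_cases j <;> fin_cases j' <;> simp [hSS] <;> intros <;> first | exact absurd rfl hne | linarith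
  have hCYdisj : ∀ c c' : Fin n → Fin 3, c ≠ c' → Disjoint (CY c) (CY c') := by
    intro c c' hcc
    obtain ⟨i, hi⟩ := Function.ne_iff.mp hcc
    rw [Set.disjoint_left]
    intro ω h1 h2
    rw [hCY] at h1 h2
    simp only [Set.mem_iInter] at h1 h2
    exact SSdisj i (c i) (c' i) hi (Y i ω) (h1 i) (h2 i)
  -- sign computation on cells
  have hsignY : ∀ (c : Fin n → Fin 3) (i : Fin n) (x : ℝ), x ∈ SS i (c i) →
      (if 0 < x - m i then (1:ℝ) else -1) = εA c i ∧
      (if 0 < -(x - m i) then (1:ℝ) else -1) = εB c i := by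
    intro c i x hx
    have h3 : c i = 0 ∨ c i = 1 ∨ c i = 2 := by omega
    rcases h3 with h | h | h <;> rw [h] at hx
    · have hx' : m i < x := hx
      constructor
      · rw [if_pos (by linarith : (0:ℝ) < x - m i)]
        show (1:ℝ) = if c i = 0 then 1 else -1
        rw [if_pos h]
      · rw [if_neg (by linarith : ¬ (0:ℝ) < -(x - m i))]
        show (-1:ℝ) = if c i = 1 then 1 else -1
        rw [if_neg (by rw [h]; decide)]
    · have hx' : x < m i := hx
      constructor
      · rw [if_neg (by linarith : ¬ (0:ℝ) < x - m i)]
        show (-1:ℝ) = if c i = 0 then 1 else -1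
        rw [if_neg (by rw [h]; decide)]
      · rw [if_pos (by linarith : (0:ℝ) < -(x - m i))]
        show (1:ℝ) = if c i = 1 then 1 else -1
        rw [if_pos h]
    · have hx' : x = m i := hx
      constructor
      · rw [if_neg (by rw [hx']; simp : ¬ (0:ℝ) < x - m i)]
        show (-1:ℝ) = if c i = 0 then 1 else -1
        rw [if_neg (by rw [h]; decide)]
      · rw [if_neg (by rw [hx']; simp : ¬ (0:ℝ) < -(x - m i))]
        show (-1:ℝ) = if c i = 1 then 1 else -1
        rw [if_neg (by rw [h]; decide)]
  -- lower bound for the Y side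
  have hYlower : μ {ω | T (fun i => Y i ω - m i) ≤ κ} ≥ ∑ c ∈ GC, ∏ i, ![p i, q i, r i] (c i) := by
    have hsub : (⋃ c ∈ GC, CY c) ⊆ {ω | T (fun i => Y i ω - m i) ≤ κ} := by
      intro ω hω
      simp only [Set.mem_iUnion] at hω
      obtain ⟨c, hcGC, hmem⟩ := hω
      rw [hGC, Finset.mem_filter] at hcGC
      have hmem' : ∀ i, Y i ω ∈ SS i (c i) := by
        intro i
        rw [hCY] at hmem
        simp only [Set.mem_iInter] at hmem
        exact hmem i
      have hTval : T (fun i => Y i ω - m i) = max (To (εA c)) (To (εB c)) := by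
        rw [hT]
        congr 1
        · congr 1
          funext i
          rw [hsign]
          exact (hsignY c i (Y i ω) (hmem' i)).1
        · congr 1
          funext i
          rw [hsign]
          exact (hsignY c i (Y i ω) (hmem' i)).2
      rw [Set.mem_setOf_eq, hTval]
      exact hcGC.2
    calc ∑ c ∈ GC, ∏ i, ![p i, q i, r i] (c i)
        = ∑ c ∈ GC, μ (CY c) := Finset.sum_congr rfl fun c _ => (hCYval c).symm
      _ = μ (⋃ c ∈ GC, CY c) := by
          rw [measure_biUnion_finset ?_ (fun c _ => hCYmeas c)]
          intro c hc c' hc' hne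
          exact hCYdisj c c' hne
      _ ≤ μ {ω | T (fun i => Y i ω - m i) ≤ κ} := measure_mono hsub
  -- cells for ξ
  set Cξ : (Fin n → Bool) → Set Ω' := fun b => ⋂ i, ξ i ⁻¹' {σA b i} with hCξ
  have hCξval : ∀ b, ν (Cξ b) = (1/2 : ENNReal)^n := by
    intro b
    rw [hCξ]
    simp only []
    rw [hξindep.meas_iInter (fun i => ⟨{σA b i}, measurableSet_singleton _, rfl⟩)]
    have : ∀ i, ν (ξ i ⁻¹' {σA b i}) = 1/2 := by
      intro i
      cases hb : b i
      · have hset : ξ i ⁻¹' {σA b i} = {ω | ξ i ω = 1}ᶜ := by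
          ext ω
          simp only [Set.mem_preimage, Set.mem_singleton_iff, Set.mem_compl_iff,
            Set.mem_setOf_eq, hσA, hb, if_false]
          constructor
          · intro h h1; rw [h1] at h; norm_num at h
          · intro h; rcases hξval i ω with h1 | h1
            · exact absurd h1 h
            · exact h1
        have hms : MeasurableSet {ω | ξ i ω = 1} := (hξmeas i) (measurableSet_singleton 1)
        rw [hset, prob_compl_eq_one_sub hms, hξdist i, h12]
      · have hset : ξ i ⁻¹' {σA b i} = {ω | ξ i ω = 1} := by
          ext ω
          simp [hσA, hb]
        rw [hset, hξdist i]
    rw [Finset.prod_congr rfl fun i _ => this i, Finset.prod_const, Finset.card_univ,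
      Fintype.card_fin]
  have hξupper : ν {ω | T (fun i => ξ i ω) ≤ κ} ≤ ∑ _b ∈ GB, (1/2 : ENNReal)^n := by
    have hsub : {ω | T (fun i => ξ i ω) ≤ κ} ⊆ ⋃ b ∈ GB, Cξ b := by
      intro ω hω
      rw [Set.mem_setOf_eq] at hω
      set b : Fin n → Bool := fun i => if ξ i ω = 1 then true else false with hb
      have hbv : ∀ i, ξ i ω = σA b i := by
        intro i
        rcases hξval i ω with h1 | h1
        · simp [hσA, hb, h1]
        · have h2 : ((-1:ℝ) = 1) = False := by norm_num
          simp [hσA, hb, h1, h2]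
      have hTval : T (fun i => ξ i ω) = max (To (σA b)) (To (σB b)) := by
        rw [hT]
        congr 1
        · congr 1
          funext i
          rw [hbv i, hsign]
          cases hbb : b i <;> simp only [hσA, hbb] <;> norm_num
        · congr 1
          funext i
          rw [hbv i, hsign]
          cases hbb : b i <;> simp only [hσA, hσB, hbb] <;> norm_num
      simp only [Set.mem_iUnion]
      refine ⟨b, ?_, ?_⟩
      · rw [hGB, Finset.mem_filter]
        exact ⟨Finset.mem_univ b, by rw [← hTval]; exact hω⟩
      · rw [hCξ]
        simp only [Set.mem_iInter, Set.mem_preimage, Set.mem_singleton_iff]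
        exact hbv
    calc ν {ω | T (fun i => ξ i ω) ≤ κ} ≤ ν (⋃ b ∈ GB, Cξ b) := measure_mono hsub
      _ ≤ ∑ b ∈ GB, ν (Cξ b) := measure_biUnion_finset_le GB Cξ
      _ = ∑ _b ∈ GB, (1/2 : ENNReal)^n := Finset.sum_congr rfl fun b _ => hCξval b
  -- compatibility
  have hcompat : ∀ b c, b ∈ GB → (∀ i, b i = true → c i ≠ 1) →
      (∀ i, b i = false → c i ≠ 0) → c ∈ GC := by
    intro b c hb h1 h0
    rw [hGB, Finset.mem_filter] at hb
    rw [hGC, Finset.mem_filter]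
    refine ⟨Finset.mem_univ c, ?_⟩
    have hA : To (εA c) ≤ To (σA b) := by
      refine hmono _ _ (fun i => by by_cases h : c i = 0 <;> simp [hεA, h])
        (fun i => by cases h : b i <;> simp [hσA, h]) (fun i => ?_)
      simp only [hεA, hσA]
      by_cases hc0 : c i = 0
      · have : b i = true := by
          cases hbi : b i
          · exact absurd hc0 (h0 i hbi)
          · rfl
        rw [if_pos hc0, this, if_pos rfl]
      · rw [if_neg hc0]
        split <;> norm_num
    have hB : To (εB c) ≤ To (σB b) := by
      refine hmono _ _ (fun i => by by_cases h : c i = 1 <;> simp [hεB, h])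
        (fun i => by cases h : b i <;> simp [hσB, h]) (fun i => ?_)
      simp only [hεB, hσB]
      by_cases hc1 : c i = 1
      · have : b i = false := by
          cases hbi : b i
          · rfl
          · exact absurd hc1 (h1 i hbi)
        rw [if_pos hc1, this, if_neg Bool.false_ne_true]
      · rw [if_neg hc1]
        split <;> norm_num
    exact le_trans (max_le_max hA hB) hb.2
  -- put everything together
  calc ν {ω | T (fun i => ξ i ω) ≤ κ}
      ≤ ∑ _b ∈ GB, (1/2 : ENNReal)^n := hξupper
    _ ≤ ∑ c ∈ GC, ∏ i, ![p i, q i, r i] (c i) :=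
        sign_test_aux n p q r hp hq hr GB GC hcompat
    _ ≤ μ {ω | T (fun i => Y i ω - m i) ≤ κ} := hYlower
end

section
/- Let f be an affine function on [a', b'] ⊂ ℝ, γ ≥ 0, ε ≥ γ, and t ∈ [a', b']. Suppose h is a convex function with h(x) ≤ f(x) + γ for all x ∈ [a', b'] and h(t) ≤ f(t) - 2ε. Then there exists a subinterval [a'', b''] ⊆ [a', b'] of length at least (b' - a')/3 on which h(x) ≤ f(x) - ε for all x. -/
/-!
Replacing `h` by the convex function `h - f` reduces to `f = 0`. Every point `x` of the
interval `[(2t + a')/3, (2t + b')/3]` is `x = y/3 + 2t/3` with `y = 3x - 2t ∈ [a', b']`, and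
convexity gives `h x ≤ h y / 3 + 2 h t / 3 ≤ γ/3 - 4ε/3 ≤ -ε`.
-/

theorem ConvexOn.apply_combo_third_le_neg {E : Type*} [AddCommGroup E] [Module ℝ E]
    {s : Set E} {g : E → ℝ} (hg : ConvexOn ℝ s g) {y t : E} (hy : y ∈ s) (ht : t ∈ s)
    {γ ε : ℝ} (hε : γ ≤ ε) (hgy : g y ≤ γ) (hgt : g t ≤ -(2 * ε)) :
    g ((1 / 3 : ℝ) • y + (2 / 3 : ℝ) • t) ≤ -ε := by
  have hcombo := hg.2 hy ht (show (0 : ℝ) ≤ 1 / 3 by norm_num)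
    (show (0 : ℝ) ≤ 2 / 3 by norm_num) (by norm_num)
  simp only [smul_eq_mul] at hcombo
  linarith

theorem concaveOn_const_add_mul (c₀ c₁ : ℝ) {s : Set ℝ} (hs : Convex ℝ s) :
    ConcaveOn ℝ s fun x => c₀ + c₁ * x :=
  (concaveOn_const c₀ hs).add ((LinearMap.mulLeft ℝ c₁).concaveOn hs)

theorem convex_below_affine_on_subinterval_general
    (a' b' : ℝ)
    (c₀ c₁ : ℝ) (f : ℝ → ℝ) (hf : ∀ x, f x = c₀ + c₁ * x)
    (γ ε : ℝ) (hε : γ ≤ ε)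
    (t : ℝ) (ht : t ∈ Set.Icc a' b')
    (h : ℝ → ℝ) (hconv : ConvexOn ℝ (Set.Icc a' b') h)
    (hub : ∀ x ∈ Set.Icc a' b', h x ≤ f x + γ)
    (hlt : h t ≤ f t - 2 * ε) :
    ∃ a'' b'', a' ≤ a'' ∧ b'' ≤ b' ∧ (b' - a') / 3 ≤ b'' - a'' ∧
      ∀ x ∈ Set.Icc a'' b'', h x ≤ f x - ε := by
  obtain rfl : f = fun x => c₀ + c₁ * x := funext hf
  have hg := hconv.sub (concaveOn_const_add_mul c₀ c₁ (convex_Icc a' b'))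
  refine ⟨(2 * t + a') / 3, (2 * t + b') / 3, by linarith [ht.1], by linarith [ht.2],
    by linarith, ?_⟩
  rintro x ⟨hxa, hxb⟩
  have hy : 3 * x - 2 * t ∈ Set.Icc a' b' := ⟨by linarith, by linarith⟩
  have hgx := hg.apply_combo_third_le_neg hy ht hε
    (by simpa only [Pi.sub_apply, sub_le_iff_le_add'] using hub _ hy)
    (by simp only [Pi.sub_apply]; linarith)
  have hx : (1 / 3 : ℝ) • (3 * x - 2 * t) + (2 / 3 : ℝ) • t = x := by
    simp only [smul_eq_mul]; ring
  rw [hx, Pi.sub_apply] at hgx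
  linarith

theorem convex_below_affine_on_subinterval
    (a' b' : ℝ) (hab : a' < b')
    (c₀ c₁ : ℝ) (f : ℝ → ℝ) (hf : ∀ x, f x = c₀ + c₁ * x)
    (γ ε : ℝ) (hγ : 0 ≤ γ) (hε : γ ≤ ε)
    (t : ℝ) (ht : t ∈ Set.Icc a' b')
    (h : ℝ → ℝ) (hconv : ConvexOn ℝ (Set.Icc a' b') h)
    (hub : ∀ x ∈ Set.Icc a' b', h x ≤ f x + γ)
    (hlt : h t ≤ f t - 2 * ε) :
    ∃ a'' b'', a' ≤ a'' ∧ b'' ≤ b' ∧ (b' - a') / 3 ≤ b'' - a'' ∧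
      ∀ x ∈ Set.Icc a'' b'', h x ≤ f x - ε :=
  convex_below_affine_on_subinterval_general a' b' c₀ c₁ f hf γ ε hε t ht h hconv hub hlt
end

section
/- Let f : [a,b] → ℝ be differentiable with |f'(x) - f'(y)| ≤ L|x-y|^{β-1} for β ∈ (1,2], L > 0. Fix t ∈ [a, b - 2δ] for some δ > 0 with t + δ ≤ b, ε > 0, γ > 0, and let h be convex with h(t) ≤ f(t) - 2ε and h(t+δ) ≤ f(t+δ) + γδ^β. Then for all λ ∈ [0, 1/2], f(t + λδ) - h(t + λδ) ≥ ε - (L/β + γ) δ^β. -/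
open MeasureTheory intervalIntegral Set

lemma taylor_holder (a b L β : ℝ) (hβ1 : 1 < β) (hL : 0 < L)
    (f f' : ℝ → ℝ)
    (hderiv : ∀ x ∈ Set.Icc a b, HasDerivAt f (f' x) x)
    (hHolder : ∀ x ∈ Set.Icc a b, ∀ y ∈ Set.Icc a b,
      |f' x - f' y| ≤ L * |x - y| ^ (β - 1))
    (x c : ℝ) (hax : a ≤ x) (hc : 0 ≤ c) (hxc : x + c ≤ b) :
    |f (x + c) - f x - c * f' x| ≤ L * c ^ β / β := by
  have hβ0 : (0:ℝ) < β := by linarith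
  have hxx : x ≤ x + c := by linarith
  have hsub : Set.Icc x (x + c) ⊆ Set.Icc a b := Set.Icc_subset_Icc hax hxc
  -- continuity of f' on [a,b]
  have hpowcont : Continuous (fun v : ℝ => |v - x| ^ (β - 1)) := by
    rw [continuous_iff_continuousAt]
    intro u
    exact (Real.continuousAt_rpow_const _ _ (Or.inr (by linarith))).comp
      ((continuous_sub_right x).abs.continuousAt)
  have hcont : ContinuousOn f' (Set.Icc a b) := by
    intro u hu
    have hgcont : Continuous (fun v : ℝ => L * |v - u| ^ (β - 1)) := by
      apply continuous_const.mul
      rw [continuous_iff_continuousAt]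
      intro w
      exact (Real.continuousAt_rpow_const _ _ (Or.inr (by linarith))).comp
        ((continuous_sub_right u).abs.continuousAt)
    have hg0 : Filter.Tendsto (fun v : ℝ => L * |v - u| ^ (β - 1))
        (nhdsWithin u (Set.Icc a b)) (nhds 0) := by
      have h1 : Filter.Tendsto (fun v : ℝ => L * |v - u| ^ (β - 1))
          (nhdsWithin u (Set.Icc a b)) (nhds (L * |u - u| ^ (β - 1))) :=
        (hgcont.tendsto u).mono_left nhdsWithin_le_nhds
      simpa [Real.zero_rpow (by linarith : β - 1 ≠ 0)] using h1
    rw [ContinuousWithinAt, tendsto_iff_dist_tendsto_zero]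
    apply squeeze_zero' (Filter.Eventually.of_forall fun v => dist_nonneg)
    · filter_upwards [self_mem_nhdsWithin] with v hv
      simpa [Real.dist_eq] using hHolder v hv u hu
    · exact hg0
  have hint : IntervalIntegrable f' volume x (x + c) := by
    apply ContinuousOn.intervalIntegrable
    rw [Set.uIcc_of_le hxx]
    exact hcont.mono hsub
  have hFTC : ∫ u in x..(x + c), f' u = f (x + c) - f x := by
    apply integral_eq_sub_of_hasDerivAt
    · intro u hu
      rw [Set.uIcc_of_le hxx] at hu
      exact hderiv u (hsub hu)
    · exact hint
  have hkey : f (x + c) - f x - c * f' x = ∫ u in x..(x + c), (f' u - f' x) := by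
    rw [intervalIntegral.integral_sub hint intervalIntegrable_const, hFTC,
      intervalIntegral.integral_const]
    simp
  have hgcont : Continuous (fun u : ℝ => L * |u - x| ^ (β - 1)) :=
    continuous_const.mul hpowcont
  have hgint : IntervalIntegrable (fun u : ℝ => L * |u - x| ^ (β - 1)) volume x (x + c) :=
    hgcont.intervalIntegrable x (x + c)
  have hbound : ‖∫ u in x..(x + c), (f' u - f' x)‖ ≤
      |∫ u in x..(x + c), L * |u - x| ^ (β - 1)| := by
    apply intervalIntegral.norm_integral_le_abs_of_norm_le _ hgint
    have hmem : ∀ᵐ u ∂(volume.restrict (Set.uIoc x (x + c))), u ∈ Set.uIoc x (x + c) :=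
      ae_restrict_mem measurableSet_uIoc
    filter_upwards [hmem] with u hu
    rw [Set.uIoc_of_le hxx] at hu
    have hu' : u ∈ Set.Icc a b := hsub ⟨le_of_lt hu.1, hu.2⟩
    have hx' : x ∈ Set.Icc a b := ⟨hax, by linarith⟩
    simpa [Real.norm_eq_abs] using hHolder u hu' x hx'
  have hcomp : (∫ u in x..(x + c), |u - x| ^ (β - 1)) = c ^ β / β := by
    have h1 : (∫ u in x..(x + c), |u - x| ^ (β - 1))
        = ∫ u in (x - x)..(x + c - x), |u| ^ (β - 1) :=
      (intervalIntegral.integral_comp_sub_right (a := x) (b := x + c)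
        (fun u => |u| ^ (β - 1)) x)
    rw [h1]
    have h2 : x - x = 0 := by ring
    have h3 : x + c - x = c := by ring
    rw [h2, h3]
    have h4 : (∫ u in (0:ℝ)..c, |u| ^ (β - 1)) = ∫ u in (0:ℝ)..c, u ^ (β - 1) := by
      apply intervalIntegral.integral_congr
      intro u hu
      rw [Set.uIcc_of_le hc] at hu
      show |u| ^ (β - 1) = u ^ (β - 1)
      rw [abs_of_nonneg hu.1]
    rw [h4, integral_rpow (Or.inl (by linarith : (-1:ℝ) < β - 1))]
    rw [Real.zero_rpow (by linarith : β - 1 + 1 ≠ 0)]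
    have : β - 1 + 1 = β := by ring
    rw [this]; ring
  have hval : (∫ u in x..(x + c), L * |u - x| ^ (β - 1)) = L * c ^ β / β := by
    rw [intervalIntegral.integral_const_mul, hcomp]; ring
  have hnn : 0 ≤ L * c ^ β / β := by positivity
  calc |f (x + c) - f x - c * f' x| = ‖∫ u in x..(x + c), (f' u - f' x)‖ := by
        rw [hkey, Real.norm_eq_abs]
    _ ≤ |∫ u in x..(x + c), L * |u - x| ^ (β - 1)| := hbound
    _ = L * c ^ β / β := by rw [hval, abs_of_nonneg hnn]

theorem convex_lower_bound_holder
    (a b L β : ℝ) (hβ : β ∈ Set.Ioc 1 2) (hL : 0 < L)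
    (f f' : ℝ → ℝ)
    (hderiv : ∀ x ∈ Set.Icc a b, HasDerivAt f (f' x) x)
    (hHolder : ∀ x ∈ Set.Icc a b, ∀ y ∈ Set.Icc a b,
      |f' x - f' y| ≤ L * |x - y| ^ (β - 1))
    (δ : ℝ) (hδ : 0 < δ)
    (t : ℝ) (hta : a ≤ t) (htb : t ≤ b - 2 * δ)
    (ε γ : ℝ) (hε : 0 < ε) (hγ : 0 < γ)
    (h : ℝ → ℝ) (hconv : ConvexOn ℝ Set.univ h)
    (h₁ : h t ≤ f t - 2 * ε)
    (h₂ : h (t + δ) ≤ f (t + δ) + γ * δ ^ β) :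
    ∀ lam ∈ Set.Icc (0 : ℝ) (1/2),
      f (t + lam * δ) - h (t + lam * δ) ≥ ε - (L / β + γ) * δ ^ β := by
  intro lam hlam
  obtain ⟨hl0, hl2⟩ := hlam
  have hβ1 := hβ.1
  have hβ0 : (0:ℝ) < β := by linarith
  have hlδ : 0 ≤ lam * δ := mul_nonneg hl0 hδ.le
  have hA := taylor_holder a b L β hβ1 hL f f' hderiv hHolder t (lam * δ) hta hlδ
    (by nlinarith)
  have hB := taylor_holder a b L β hβ1 hL f f' hderiv hHolder t δ hta hδ.le
    (by linarith)
  have hA' : -(L * (lam * δ) ^ β / β) ≤ f (t + lam * δ) - f t - (lam * δ) * f' t :=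
    (abs_le.mp hA).1
  have hB' : f (t + δ) - f t - δ * f' t ≤ L * δ ^ β / β := (abs_le.mp hB).2
  -- convexity
  have hcvx : h (t + lam * δ) ≤ (1 - lam) * h t + lam * h (t + δ) := by
    have heq : (1 - lam) • t + lam • (t + δ) = t + lam * δ := by
      simp [smul_eq_mul]; ring
    have := hconv.2 (Set.mem_univ t) (Set.mem_univ (t + δ))
      (by linarith : (0:ℝ) ≤ 1 - lam) hl0 (by ring)
    rw [heq] at this
    simpa [smul_eq_mul] using this
  -- rpow facts
  have hδβ : 0 ≤ δ ^ β := Real.rpow_nonneg hδ.le β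
  have hlb : (lam * δ) ^ β = lam ^ β * δ ^ β := Real.mul_rpow hl0 hδ.le
  have hlam_pow : lam ^ β ≤ lam := by
    rcases eq_or_lt_of_le hl0 with h0 | h0
    · rw [← h0, Real.zero_rpow (by linarith : β ≠ 0)]
    · calc lam ^ β ≤ lam ^ (1:ℝ) :=
            Real.rpow_le_rpow_of_exponent_ge h0 (by linarith) (by linarith)
        _ = lam := Real.rpow_one lam
  rw [hlb] at hA'
  have hD : 0 ≤ L * δ ^ β / β := by positivity
  have hpowD : lam ^ β * (L * δ ^ β / β) ≤ lam * (L * δ ^ β / β) :=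
    mul_le_mul_of_nonneg_right hlam_pow hD
  have hBl : lam * (f (t + δ) - f t - δ * f' t) ≤ lam * (L * δ ^ β / β) :=
    mul_le_mul_of_nonneg_left hB' hl0
  have hgδ : lam * (γ * δ ^ β) ≤ γ * δ ^ β := by
    nlinarith [mul_nonneg hγ.le hδβ]
  have hgoal : (L / β + γ) * δ ^ β = L * δ ^ β / β + γ * δ ^ β := by ring
  rw [ge_iff_le, hgoal]
  have hA'' : -(lam ^ β * (L * δ ^ β / β)) ≤ f (t + lam * δ) - f t - (lam * δ) * f' t := by
    have : L * (lam ^ β * δ ^ β) / β = lam ^ β * (L * δ ^ β / β) := by ring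
    linarith [hA', this.le]
  nlinarith [hcvx, hA'', hpowD, hBl, hgδ, hε.le]
end
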